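/- arXiv:2207.07075 — 3 statements merged into one kernel-verified Lean document; each statement's English description precedes it below -/
import Mathlib

section
/- For all x ≥ 0, x·φ(x)/(2Φ(x) - 1) ≤ 1/2, with equality if and only if x = 0 (interpreting the left side as its limit 1/2 at x = 0). -/
noncomputable def stdPhi (x : ℝ) : ℝ := (Real.sqrt (2 * Real.pi))⁻¹ * Real.exp (-x ^ 2 / 2)

noncomputable def stdCDF (x : ℝ) : ℝ := ∫ t in Set.Iic x, stdPhi t

noncomputable def Mratio (x : ℝ) : ℝ :=
  if x = 0 then 1 / 2 else x * stdPhi x / (2 * stdCDF x - 1)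

/-!
For `x > 0`, `2Φ(x) - 1 = 2∫₀ˣ φ` because `Φ(0) = 1/2` by symmetry of `φ`, and since `φ` is
strictly decreasing on `[0, x]` this integral strictly exceeds `x φ(x)`.
-/

open Real MeasureTheory Set

lemma mul_lt_intervalIntegral_of_strictAntiOn {f : ℝ → ℝ} {a b : ℝ} (hab : a < b)
    (hf : ContinuousOn f (Icc a b)) (hanti : StrictAntiOn f (Icc a b)) :
    (b - a) * f b < ∫ t in a..b, f t := by
  rw [← smul_eq_mul, ← intervalIntegral.integral_const]
  refine intervalIntegral.integral_lt_integral_of_continuousOn_of_le_of_exists_lt hab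
    continuousOn_const hf
    (fun t ht => hanti.antitoneOn ⟨ht.1.le, ht.2⟩ (right_mem_Icc.2 hab.le) ht.2)
    ⟨a, left_mem_Icc.2 hab.le, hanti (left_mem_Icc.2 hab.le) (right_mem_Icc.2 hab.le) hab⟩

lemma stdPhi_pos (x : ℝ) : 0 < stdPhi x := by
  unfold stdPhi
  positivity

lemma continuous_stdPhi : Continuous stdPhi := by
  unfold stdPhi
  fun_prop

lemma stdPhi_neg (x : ℝ) : stdPhi (-x) = stdPhi x := by
  simp [stdPhi]

lemma stdPhi_eq_const_mul_exp (x : ℝ) :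
    stdPhi x = (√(2 * π))⁻¹ * exp (-(1 / 2) * x ^ 2) := by
  unfold stdPhi
  ring_nf

lemma integrable_stdPhi : Integrable stdPhi := by
  simpa only [← stdPhi_eq_const_mul_exp] using
    (integrable_exp_neg_mul_sq (by norm_num : (0 : ℝ) < 1 / 2)).const_mul (√(2 * π))⁻¹

lemma integral_stdPhi : ∫ x, stdPhi x = 1 := by
  simp_rw [stdPhi_eq_const_mul_exp]
  rw [integral_const_mul, integral_gaussian, show π / (1 / 2) = 2 * π by ring,
    inv_mul_cancel₀ (by positivity)]

lemma strictAntiOn_stdPhi : StrictAntiOn stdPhi (Ici 0) := by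
  intro a ha b _ hab
  unfold stdPhi
  gcongr

lemma stdCDF_sub_stdCDF (a b : ℝ) : stdCDF b - stdCDF a = ∫ t in a..b, stdPhi t :=
  intervalIntegral.integral_Iic_sub_Iic
    integrable_stdPhi.integrableOn integrable_stdPhi.integrableOn

lemma stdCDF_zero : stdCDF 0 = 1 / 2 := by
  have hsplit : stdCDF 0 + ∫ t in Ioi 0, stdPhi t = 1 := by
    rw [← integral_stdPhi, stdCDF, intervalIntegral.integral_Iic_add_Ioi
      integrable_stdPhi.integrableOn integrable_stdPhi.integrableOn]
  have hsymm : ∫ t in Ioi 0, stdPhi t = stdCDF 0 := by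
    rw [stdCDF, ← neg_zero, ← integral_comp_neg_Iic]
    simp only [stdPhi_neg, neg_zero]
  linarith

lemma mul_stdPhi_lt_stdCDF_sub_half {x : ℝ} (hx : 0 < x) : x * stdPhi x < stdCDF x - 1 / 2 := by
  rw [← stdCDF_zero, stdCDF_sub_stdCDF]
  simpa only [sub_zero] using mul_lt_intervalIntegral_of_strictAntiOn hx
    continuous_stdPhi.continuousOn (strictAntiOn_stdPhi.mono Icc_subset_Ici_self)

lemma Mratio_lt_half {x : ℝ} (hx : 0 < x) : Mratio x < 1 / 2 := by
  have hlt := mul_stdPhi_lt_stdCDF_sub_half hx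
  have hnum := mul_pos hx (stdPhi_pos x)
  rw [Mratio, if_neg hx.ne', div_lt_iff₀ (by linarith)]
  linarith

theorem normal_upper_bound :
    ∀ x : ℝ, 0 ≤ x → Mratio x ≤ 1 / 2 ∧ (Mratio x = 1 / 2 ↔ x = 0) := by
  intro x hx
  rcases hx.eq_or_lt with rfl | hpos
  · simp [Mratio]
  · have hlt := Mratio_lt_half hpos
    exact ⟨hlt.le, iff_of_false hlt.ne hpos.ne'⟩
end

section
/- If T ~ FoldedNormal(μ, σ²) (i.e. T = |R| with R ~ N(μ, σ²)), then Var(T) ≤ σ² for all μ ∈ ℝ. -/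
open MeasureTheory ProbabilityTheory Real
open scoped ENNReal NNReal

lemma gauss_exp_sq_integral {b : ℝ} (hb : 0 < b) :
    ∫ x : ℝ, x ^ 2 * Real.exp (-b * x ^ 2) = b ^ (-(3:ℝ)/2) * Real.sqrt π / 2 := by
  have heven : ∫ x : ℝ, x ^ 2 * Real.exp (-b * x ^ 2)
      = 2 * ∫ x in Set.Ioi (0:ℝ), x ^ 2 * Real.exp (-b * x ^ 2) := by
    rw [← integral_comp_abs (f := fun x => x ^ 2 * Real.exp (-b * x ^ 2))]
    congr 1 with x
    rw [sq_abs]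
  have hg := integral_rpow_mul_exp_neg_mul_rpow (p := 2) (q := 2) (b := b)
    two_pos (by norm_num) hb
  have h2 : ∀ x : ℝ, x ^ (2:ℝ) = x ^ (2:ℕ) := fun x => by
    rw [show ((2:ℝ)) = ((2:ℕ):ℝ) by norm_num, Real.rpow_natCast]
  simp only [h2] at hg
  rw [heven, hg]
  have hΓ : Real.Gamma ((2 + 1) / 2) = Real.sqrt π / 2 := by
    rw [show ((2:ℝ) + 1)/2 = 1/2 + 1 by norm_num, Real.Gamma_add_one (by norm_num),
      Real.Gamma_one_half_eq]
    ring
  rw [hΓ]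
  ring_nf

lemma gauss_sq_integral {v : NNReal} (hv : (0:ℝ) < v) :
    ∫ x : ℝ, x ^ 2 * gaussianPDFReal 0 v x = v := by
  have hb : (0:ℝ) < (2 * (v:ℝ))⁻¹ := by positivity
  unfold gaussianPDFReal
  have harg : ∀ x : ℝ, -(x - 0) ^ 2 / (2 * (v:ℝ)) = -(2 * (v:ℝ))⁻¹ * x ^ 2 := by
    intro x; field_simp; simp
  simp only [harg]
  rw [show (∫ x : ℝ, x ^ 2 * ((Real.sqrt (2 * π * v))⁻¹ * Real.exp (-(2 * (v:ℝ))⁻¹ * x ^ 2)))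
      = (Real.sqrt (2 * π * v))⁻¹ * ∫ x : ℝ, x ^ 2 * Real.exp (-(2 * (v:ℝ))⁻¹ * x ^ 2) by
    rw [← integral_const_mul]; congr 1 with x; ring]
  rw [gauss_exp_sq_integral hb]
  have hc : (0:ℝ) < 2 * v := by positivity
  have h1 : ((2 * (v:ℝ))⁻¹) ^ (-(3:ℝ)/2) = (2 * (v:ℝ)) * Real.sqrt (2 * (v:ℝ)) := by
    rw [Real.inv_rpow hc.le, ← Real.rpow_neg hc.le,
      show -(-(3:ℝ)/2) = 1 + 1/2 by norm_num,
      Real.rpow_add hc, Real.rpow_one, ← Real.sqrt_eq_rpow]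
  have hsplit : Real.sqrt (2 * π * v) = Real.sqrt (2*(v:ℝ)) * Real.sqrt π := by
    rw [show 2 * π * (v:ℝ) = (2*(v:ℝ)) * π by ring, Real.sqrt_mul hc.le]
  rw [h1, hsplit]
  have h2v : Real.sqrt (2*(v:ℝ)) ≠ 0 := ne_of_gt (Real.sqrt_pos.mpr hc)
  have hπ : Real.sqrt π ≠ 0 := ne_of_gt (Real.sqrt_pos.mpr pi_pos)
  field_simp

lemma gauss_withDensity {v : NNReal} (hv : (0:ℝ) < v) :
    gaussianReal 0 v
      = MeasureTheory.volume.withDensity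
        (fun x => ((gaussianPDFReal 0 v x).toNNReal : ENNReal)) := by
  have hv' : v ≠ 0 := by
    intro h; rw [h] at hv; simp at hv
  rw [gaussianReal_of_var_ne_zero 0 hv']
  rfl

lemma gauss_pdf_smul (v : NNReal) (g : ℝ → ℝ) (x : ℝ) :
    (gaussianPDFReal 0 v x).toNNReal • g x = gaussianPDFReal 0 v x * g x := by
  simp [NNReal.smul_def, Real.coe_toNNReal _ (gaussianPDFReal_nonneg 0 v x)]

lemma gauss_sq_integrable {v : NNReal} (hv : (0:ℝ) < v) :
    Integrable (fun x : ℝ => x ^ 2) (gaussianReal 0 v) := by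
  rw [gauss_withDensity hv,
    integrable_withDensity_iff_integrable_smul
      (measurable_gaussianPDFReal 0 v).real_toNNReal]
  simp only [gauss_pdf_smul v (fun y : ℝ => y ^ 2)]
  have hb : (0:ℝ) < (2 * (v:ℝ))⁻¹ := by positivity
  have hbase : Integrable (fun x : ℝ => x ^ 2 * Real.exp (-(2 * (v:ℝ))⁻¹ * x ^ 2)) := by
    have := integrable_rpow_mul_exp_neg_mul_sq hb (s := 2) (by norm_num)
    have h2 : ∀ x : ℝ, x ^ (2:ℝ) = x ^ (2:ℕ) := fun x => by
      rw [show ((2:ℝ)) = ((2:ℕ):ℝ) by norm_num, Real.rpow_natCast]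
    simpa only [h2] using this
  have := (hbase.const_mul ((Real.sqrt (2 * π * v))⁻¹))
  apply this.congr
  filter_upwards with x
  unfold gaussianPDFReal
  have harg : -(x - 0) ^ 2 / (2 * (v:ℝ)) = -(2 * (v:ℝ))⁻¹ * x ^ 2 := by
    field_simp; simp
  rw [harg]; ring

lemma gauss_moment2 {v : NNReal} (hv : (0:ℝ) < v) :
    ∫ x : ℝ, x ^ 2 ∂(gaussianReal 0 v) = v := by
  rw [gauss_withDensity hv,
    integral_withDensity_eq_integral_smul
      (measurable_gaussianPDFReal 0 v).real_toNNReal]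
  simp only [gauss_pdf_smul v (fun y : ℝ => y ^ 2)]
  rw [← gauss_sq_integral hv]
  congr 1 with x
  ring

theorem foldedNormal_variance_le (μ σ : ℝ) (hσ : 0 < σ) :
    variance (fun x => |x|) (gaussianReal μ ⟨σ ^ 2, sq_nonneg σ⟩) ≤ σ ^ 2 := by
  set v : NNReal := ⟨σ ^ 2, sq_nonneg σ⟩ with hv_def
  have hv : (0:ℝ) < v := by
    show (0:ℝ) < σ ^ 2
    positivity
  set ν := gaussianReal μ v with hν_def
  have hmap : (gaussianReal 0 v).map (· + μ) = ν := by
    simpa using gaussianReal_map_add_const (μ := 0) (v := v) μ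
  have hmeas_add : Measurable (fun x : ℝ => x + μ) := measurable_id.add_const μ
  have h0 : MemLp id 2 (gaussianReal 0 v) := by
    refine (memLp_two_iff_integrable_sq aestronglyMeasurable_id).mpr ?_
    simpa using gauss_sq_integrable hv
  have hshift : MemLp (fun x : ℝ => x + μ) 2 (gaussianReal 0 v) :=
    h0.add (memLp_const μ)
  have hid : MemLp id 2 ν := by
    rw [← hmap, memLp_map_measure_iff aestronglyMeasurable_id hmeas_add.aemeasurable]
    exact hshift
  have habs : MemLp (fun x => |x|) 2 ν := hid.abs
  have hM : ∫ x, (x - μ)^2 ∂ν = (v:ℝ) := by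
    rw [← hmap, integral_map hmeas_add.aemeasurable
      ((measurable_id'.sub_const μ).pow_const 2).aestronglyMeasurable]
    simp_rw [add_sub_cancel_right]
    exact gauss_moment2 hv
  have hsq : Integrable (fun x => |x|^2) ν := habs.integrable_sq
  have habs1 : Integrable (fun x => |x|) ν := habs.integrable one_le_two
  have hdev : Integrable (fun x : ℝ => (x - μ)^2) ν :=
    (hid.sub (memLp_const μ)).integrable_sq
  have hdevabs : Integrable (fun x : ℝ => (|x| - |μ|)^2) ν :=
    (habs.sub (memLp_const |μ|)).integrable_sq
  have key : ∫ x, (|x| - |μ|)^2 ∂ν ≤ σ ^ 2 := by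
    calc ∫ x, (|x| - |μ|)^2 ∂ν ≤ ∫ x, (x - μ)^2 ∂ν := by
          refine integral_mono hdevabs hdev fun x => ?_
          have h1 : |(|x| - |μ|)| ≤ |x - μ| := abs_abs_sub_abs_le_abs_sub x μ
          calc (|x| - |μ|)^2 = |(|x| - |μ|)|^2 := (sq_abs _).symm
            _ ≤ |x - μ|^2 := by
                exact pow_le_pow_left₀ (abs_nonneg _) h1 2
            _ = (x - μ)^2 := sq_abs _
      _ = σ ^ 2 := hM
  have hexp : ∫ x, (|x| - |μ|)^2 ∂ν
      = (∫ x, |x|^2 ∂ν) - 2 * |μ| * (∫ x, |x| ∂ν) + μ ^ 2 := by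
    have hrw : (fun x : ℝ => (|x| - |μ|)^2)
        = fun x : ℝ => (|x|^2 - 2 * |μ| * |x|) + μ ^ 2 := by
      funext x
      have : |μ|^2 = μ^2 := sq_abs μ
      nlinarith [this]
    have hmul : Integrable (fun x : ℝ => 2 * |μ| * |x|) ν := habs1.const_mul (2 * |μ|)
    have hInt1 : Integrable (fun x : ℝ => |x| ^ 2 - 2 * |μ| * |x|) ν := hsq.sub hmul
    rw [hrw, integral_add hInt1 (integrable_const _), integral_sub hsq hmul,
      MeasureTheory.integral_const_mul]
    simp [measure_univ]
  rw [variance_eq_sub habs]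
  simp only [Pi.pow_apply]
  have hnn := sq_nonneg ((∫ x, |x| ∂ν) - |μ|)
  have habs_sq : μ ^ 2 = |μ| ^ 2 := (sq_abs μ).symm
  nlinarith [key, hexp]
end

section
/- Let K = {x ∈ ℝⁿ : 0 ≤ x₁ ≤ x₂ ≤ … ≤ xₙ} be the nonnegative monotone cone and W = {x ∈ ℝⁿ : x₁ ≤ … ≤ xₙ} the monotone cone. Then for every v ∈ ℝⁿ, the Euclidean projection onto K satisfies Π_K(v) = (Π_W(v))⁺, where (z⁺)ᵢ = max(zᵢ, 0) componentwise. -/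
open InnerProductSpace
set_option maxHeartbeats 1000000


def monoCone (n : ℕ) : Set (EuclideanSpace ℝ (Fin n)) :=
  {x | ∀ i j : Fin n, i ≤ j → x i ≤ x j}

def nonnegMonoCone (n : ℕ) : Set (EuclideanSpace ℝ (Fin n)) :=
  {x | (∀ i j : Fin n, i ≤ j → x i ≤ x j) ∧ ∀ i, 0 ≤ x i}

theorem projection_nonneg_monotone_cone (n : ℕ) (v p : EuclideanSpace ℝ (Fin n))
    (hpW : p ∈ monoCone n) (hpmin : ∀ y ∈ monoCone n, dist v p ≤ dist v y) :
    (WithLp.toLp 2 (fun i => max (p i) 0) : EuclideanSpace ℝ (Fin n)) ∈ nonnegMonoCone n ∧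
    ∀ y ∈ nonnegMonoCone n,
      dist v (WithLp.toLp 2 (fun i => max (p i) 0) : EuclideanSpace ℝ (Fin n)) ≤ dist v y := by
  set q : EuclideanSpace ℝ (Fin n) := WithLp.toLp 2 (fun i => max (p i) 0) with hqdef
  set r : EuclideanSpace ℝ (Fin n) := WithLp.toLp 2 (fun i => min (p i) 0) with hrdef
  have hqW : q ∈ monoCone n := fun i j hij => max_le_max (hpW i j hij) le_rfl
  have hrW : r ∈ monoCone n := fun i j hij => min_le_min (hpW i j hij) le_rfl
  have hqK : q ∈ nonnegMonoCone n := ⟨hqW, fun i => le_max_right _ _⟩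
  have hconv : Convex ℝ (monoCone n) := by
    intro x hx y hy a b ha hb hab i j hij
    have h1 : (a • x + b • y) i = a * x i + b * y i := by
      simp [PiLp.add_apply, PiLp.smul_apply, smul_eq_mul]
    have h2 : (a • x + b • y) j = a * x j + b * y j := by
      simp [PiLp.add_apply, PiLp.smul_apply, smul_eq_mul]
    rw [h1, h2]
    exact add_le_add (mul_le_mul_of_nonneg_left (hx i j hij) ha)
      (mul_le_mul_of_nonneg_left (hy i j hij) hb)
  have hvar : ∀ w ∈ monoCone n, ⟪v - p, w - p⟫_ℝ ≤ 0 := by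
    intro w hw
    by_contra hpos
    push_neg at hpos
    have hwp : w - p ≠ 0 := by
      intro h; rw [h, inner_zero_right] at hpos; exact lt_irrefl 0 hpos
    have hN : (0:ℝ) < ‖w - p‖ ^ 2 := pow_pos (norm_pos_iff.mpr hwp) 2
    set I : ℝ := ⟪v - p, w - p⟫_ℝ with hI
    set N : ℝ := ‖w - p‖ ^ 2 with hNdef
    set t : ℝ := min 1 (I / N) with ht
    have ht0 : 0 < t := lt_min one_pos (div_pos hpos hN)
    have ht1 : t ≤ 1 := min_le_left _ _
    have hmem : p + t • (w - p) ∈ monoCone n := by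
      have h := hconv hpW hw (a := 1 - t) (b := t) (by linarith) ht0.le (by ring)
      have heq : p + t • (w - p) = (1 - t) • p + t • w := by module
      rw [heq]; exact h
    have hdist := hpmin _ hmem
    rw [dist_eq_norm, dist_eq_norm] at hdist
    have hsq : ‖v - p‖ ^ 2 ≤ ‖v - (p + t • (w - p))‖ ^ 2 :=
      pow_le_pow_left₀ (norm_nonneg _) hdist 2
    have hexp : ‖v - (p + t • (w - p))‖ ^ 2 = ‖v - p‖ ^ 2 - 2 * (t * I) + t ^ 2 * N := by
      have heq : v - (p + t • (w - p)) = (v - p) - t • (w - p) := by module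
      rw [heq, norm_sub_sq_real, real_inner_smul_right, norm_smul, mul_pow,
        Real.norm_eq_abs, sq_abs, hNdef]
    have h2I : 2 * I ≤ t * N := by nlinarith
    have htN : t * N ≤ I := by
      have hmin : t ≤ I / N := min_le_right _ _
      calc t * N ≤ (I / N) * N := mul_le_mul_of_nonneg_right hmin hN.le
        _ = I := div_mul_cancel₀ _ (ne_of_gt hN)
    linarith
  have h0W : (0 : EuclideanSpace ℝ (Fin n)) ∈ monoCone n := fun i j _ => le_rfl
  have h2pW : p + p ∈ monoCone n := fun i j hij => by
    have := hpW i j hij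
    simp only [PiLp.add_apply]; linarith
  have hpp : ⟪v - p, p⟫_ℝ = 0 := by
    have h1 := hvar 0 h0W
    have h2 := hvar (p + p) h2pW
    rw [zero_sub, inner_neg_right] at h1
    rw [add_sub_cancel_right] at h2
    linarith
  have hle : ∀ w ∈ monoCone n, ⟪v - p, w⟫_ℝ ≤ 0 := by
    intro w hw
    have := hvar w hw
    rw [inner_sub_right, hpp] at this
    linarith
  have hqr : q = p - r := by
    ext i
    simp only [hqdef, hrdef, PiLp.sub_apply, PiLp.toLp_apply]
    rcases le_total (p i) 0 with h | h <;> simp [max_eq_left, max_eq_right, min_eq_left,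
      min_eq_right, h]
  have hvpq : ⟪v - p, q⟫_ℝ = 0 := by
    have h1 := hle q hqW
    have h2 : (0:ℝ) ≤ ⟪v - p, q⟫_ℝ := by
      rw [hqr, inner_sub_right, hpp]
      have := hle r hrW
      linarith
    linarith
  refine ⟨hqK, fun y hy => ?_⟩
  have hry : ⟪r, y⟫_ℝ ≤ 0 := by
    rw [PiLp.inner_apply]
    apply Finset.sum_nonpos
    intro i _
    simp only [RCLike.inner_apply, conj_trivial]
    calc y i * min (p i) 0 ≤ y i * 0 :=
          mul_le_mul_of_nonneg_left (min_le_right _ _) (hy.2 i)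
      _ = 0 := mul_zero _
  have hrq : ⟪r, q⟫_ℝ = 0 := by
    rw [PiLp.inner_apply]
    apply Finset.sum_eq_zero
    intro i _
    simp only [RCLike.inner_apply, conj_trivial, hqdef, hrdef]
    rcases le_total (p i) 0 with h | h
    · rw [max_eq_right h, zero_mul]
    · rw [min_eq_right h, mul_zero]
  have hkey : ⟪v - q, y - q⟫_ℝ ≤ 0 := by
    have hvq : v - q = (v - p) + r := by rw [hqr]; abel
    rw [hvq, inner_add_left, inner_sub_right, inner_sub_right, hvpq, hrq]
    have h1 := hle y hy.1
    linarith
  have hexp : dist v y ^ 2 = dist v q ^ 2 - 2 * ⟪v - q, y - q⟫_ℝ + ‖y - q‖ ^ 2 := by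
    have hsub : v - y = (v - q) - (y - q) := by abel
    rw [dist_eq_norm, dist_eq_norm, hsub, norm_sub_sq_real]
  nlinarith [dist_nonneg (x := v) (y := q), dist_nonneg (x := v) (y := y), sq_nonneg ‖y - q‖]
end
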